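/- For every complex s with Re(s) > 1, s·∫₁^∞ f(x)·x^(−s−1) dx = η(s)/ζ(s), where f(x) = ∑_{k ≤ x} μ(k)·ν(x/k), η is the Dirichlet eta function, and ζ is the Riemann zeta function. -/

import Mathlib

open MeasureTheory ArithmeticFunction

noncomputable def nu (x : ℝ) : ℝ := 2 * Int.fract (x / 2) - Int.fract x

noncomputable def fconv (x : ℝ) : ℝ :=
  ∑ k ∈ Finset.Icc 1 ⌊x⌋₊, (moebius k : ℝ) * nu (x / k)

/-!
Since `∑_{k ≤ n} μ(k) ⌊n/k⌋ = 1` for every `n ≥ 1` and `ν(y) = ⌊y⌋ - 2⌊y/2⌋`, writing `n = ⌊x⌋`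
gives `f(x) = 1 - 2 = -1` for `x ≥ 2` and `f(x) = 1` for `1 ≤ x < 2`. The Mellin integral of
this step function is elementary: `s ∫₁^∞ f(x) x^(-s-1) dx = 1 - 2·2^(-s) = 1 - 2^(1-s)`,
which is `η(s)/ζ(s)` because `ζ(s) ≠ 0` for `Re s > 1`.
-/

open Finset

theorem sum_Ioc_moebius_mul_div {R : Type*} [Ring R] {M N : ℕ} (h : M ≤ N) :
    ∑ n ∈ Ioc 0 N, (moebius n : R) * ↑(M / n) = if M = 0 then 0 else 1 := by
  have hM : ∑ n ∈ Ioc 0 M, (moebius n : R) * ↑(M / n) = if M = 0 then 0 else 1 := by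
    have := sum_Ioc_mul_zeta_eq_sum (moebius : ArithmeticFunction R) M
    simp only [coe_moebius_mul_coe_zeta, intCoe_apply] at this
    rw [← this]
    rcases Nat.eq_zero_or_pos M with rfl | hM
    · simp
    · rw [sum_eq_single_of_mem 1 (mem_Ioc.mpr ⟨one_pos, hM⟩) fun n _ hn1 => by
        simp [one_apply_ne hn1]]
      simp [hM.ne']
  rw [← hM]
  refine (sum_subset (Ioc_subset_Ioc_right h) fun n hnN hnM => ?_).symm
  simp only [mem_Ioc, not_and, not_le] at hnN hnM
  simp [Nat.div_eq_of_lt (hnM hnN.1)]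

theorem nu_eq_floor_sub (y : ℝ) : nu y = ⌊y⌋ - 2 * ⌊y / 2⌋ := by
  rw [nu, Int.fract, Int.fract]
  ring

theorem nu_div_natCast {x : ℝ} (hx : 0 ≤ x) (k : ℕ) :
    nu (x / k) = ↑(⌊x⌋₊ / k) - 2 * ↑(⌊x⌋₊ / 2 / k) := by
  have hxk : 0 ≤ x / k := by positivity
  rw [nu_eq_floor_sub, ← natCast_floor_eq_intCast_floor hxk,
    ← natCast_floor_eq_intCast_floor (by positivity), Nat.floor_div_ofNat,
    Nat.floor_div_natCast, Nat.div_div_eq_div_mul, Nat.div_div_eq_div_mul, mul_comm k]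

theorem fconv_eq_of_nonneg {x : ℝ} (hx : 0 ≤ x) :
    fconv x = (if ⌊x⌋₊ = 0 then 0 else 1) - 2 * (if ⌊x⌋₊ / 2 = 0 then 0 else 1) := by
  have hIcc : Icc 1 ⌊x⌋₊ = Ioc 0 ⌊x⌋₊ := rfl
  simp only [fconv, nu_div_natCast hx, hIcc, mul_sub, sum_sub_distrib, mul_left_comm _ (2 : ℝ),
    ← mul_sum]
  rw [sum_Ioc_moebius_mul_div le_rfl, sum_Ioc_moebius_mul_div (Nat.div_le_self _ 2)]

theorem fconv_eq_ite {x : ℝ} (hx : 1 ≤ x) : fconv x = if 2 ≤ x then -1 else 1 := by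
  have h1 : ⌊x⌋₊ ≠ 0 := Nat.one_le_iff_ne_zero.mp ((Nat.one_le_floor_iff x).mpr hx)
  rw [fconv_eq_of_nonneg (by linarith)]
  have h2 : ⌊x⌋₊ / 2 = 0 ↔ x < 2 := by
    rw [Nat.div_eq_zero_iff_lt two_pos, Nat.floor_lt (by linarith)]
    norm_num
  by_cases h : 2 ≤ x
  · rw [if_pos h, if_neg h1, if_neg (h2.not.mpr (not_lt.mpr h))]
    norm_num
  · rw [if_neg h, if_neg h1, if_pos (h2.mpr (not_le.mp h))]
    norm_num

theorem integral_Ioi_cpow_neg_sub_one {s : ℂ} (hs : 0 < s.re) {a : ℝ} (ha : 0 < a) :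
    ∫ x in Set.Ioi a, (x : ℂ) ^ (-s - 1) = (a : ℂ) ^ (-s) / s := by
  rw [integral_Ioi_cpow_of_lt (by simp; linarith) ha]
  simp [neg_div_neg_eq]

theorem integral_Ioi_one_fconv_mul_cpow {s : ℂ} (hs : 0 < s.re) :
    ∫ x in Set.Ioi (1 : ℝ), (fconv x : ℂ) * (x : ℂ) ^ (-s - 1) = (1 - 2 * 2 ^ (-s)) / s := by
  set g : ℝ → ℂ := fun x => (x : ℂ) ^ (-s - 1)
  have hg : IntegrableOn g (Set.Ioi 1) :=
    integrableOn_Ioi_cpow_of_lt (by simp; linarith) one_pos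
  have hfg : Set.EqOn (fun x => (fconv x : ℂ) * g x)
      (fun x => g x - 2 * (Set.Ici 2).indicator g x) (Set.Ioi 1) := by
    intro x hx
    dsimp only
    by_cases h : 2 ≤ x
    · rw [fconv_eq_ite hx.le, if_pos h, Set.indicator_of_mem (Set.mem_Ici.mpr h)]
      push_cast
      ring
    · rw [fconv_eq_ite hx.le, if_neg h, Set.indicator_of_notMem (mt Set.mem_Ici.mp h)]
      simp
  rw [setIntegral_congr_fun measurableSet_Ioi hfg,
    integral_sub hg ((hg.indicator measurableSet_Ici).const_mul 2), integral_const_mul,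
    setIntegral_indicator measurableSet_Ici,
    Set.inter_eq_right.mpr (Set.Ici_subset_Ioi.mpr one_lt_two), integral_Ici_eq_integral_Ioi,
    integral_Ioi_cpow_neg_sub_one hs one_pos, integral_Ioi_cpow_neg_sub_one hs two_pos]
  push_cast
  rw [Complex.one_cpow]
  ring

theorem stmt_9 : ∀ s : ℂ, 1 < s.re →
    s * ∫ x in Set.Ioi (1 : ℝ), (fconv x : ℂ) * (x : ℂ) ^ (-s - 1) =
      (1 - 2 ^ (1 - s)) * riemannZeta s / riemannZeta s := by
  intro s hs
  have hs0 : s ≠ 0 := fun h => by simp [h] at hs; linarith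
  have h2 : (2 : ℂ) ^ (1 - s) = 2 * 2 ^ (-s) := by
    rw [sub_eq_add_neg, Complex.cpow_add _ _ two_ne_zero, Complex.cpow_one]
  rw [integral_Ioi_one_fconv_mul_cpow (by linarith), mul_div_cancel₀ _ hs0,
    mul_div_cancel_right₀ _ (riemannZeta_ne_zero_of_one_lt_re hs), h2]
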